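/- Fix m > 0, m_s > 1, α > 0, 0 < r₀ < r₂ and z > 0. For γ̄ > 0, let G_γ̄(x) = ∫₀^x m^m ((m_s − 1)γ̄)^{m_s} y^{m−1} / (B(m, m_s) (m y + (m_s − 1)γ̄)^{m + m_s}) dy be the Fisher–Snedecor F power CDF with mean γ̄, and define the outage probability OP(γ̄) = (2 / ((r₂² − r₀²) α)) ∫_{r₀^α}^{r₂^α} G_γ̄(x·z) x^{2/α − 1} dx (i.e., OP(γ̄) = P(X/D ≤ z) for X Fisher–F-distributed with mean γ̄ independent of the path-loss factor D). Then lim_{γ̄ → ∞} γ̄^m · OP(γ̄) = 2 (r₂^{2 + αm} − r₀^{2 + αm}) m^{m−1} z^m / ((2 + αm)(r₂² − r₀²) B(m, m_s) (m_s − 1)^m). In particular OP(γ̄) decays like γ̄^{−m}, so the diversity order is m. -/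

import Mathlib

open MeasureTheory Real Set Filter intervalIntegral

/-- The real Beta function `B(a,b) = Γ(a)Γ(b)/Γ(a+b)`. -/
noncomputable def betaFn (a b : ℝ) : ℝ := Real.Gamma a * Real.Gamma b / Real.Gamma (a + b)

section Aux

lemma betaFn_pos {a b : ℝ} (ha : 0 < a) (hb : 0 < b) : 0 < betaFn a b :=
  div_pos (mul_pos (Real.Gamma_pos_of_pos ha) (Real.Gamma_pos_of_pos hb))
    (Real.Gamma_pos_of_pos (by linarith))

lemma inner_integrable (m ms γ w : ℝ) (hm : 0 < m) (hms : 1 < ms) (hγ : 0 < γ) (hw : 0 ≤ w) :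
    IntervalIntegrable (fun y => m ^ m * ((ms - 1) * γ) ^ ms * y ^ (m - 1) /
      (betaFn m ms * (m * y + (ms - 1) * γ) ^ (m + ms))) volume 0 w := by
  have heq : (fun y => m ^ m * ((ms - 1) * γ) ^ ms * y ^ (m - 1) /
      (betaFn m ms * (m * y + (ms - 1) * γ) ^ (m + ms)))
      = fun y => (fun y => y ^ (m-1)) y *
        (m ^ m * ((ms - 1) * γ) ^ ms / (betaFn m ms * (m * y + (ms - 1) * γ) ^ (m + ms))) := by
    funext y; ring
  rw [heq]
  apply (intervalIntegrable_rpow' (by linarith)).mul_continuousOn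
  have hB := betaFn_pos hm (by linarith : (0:ℝ) < ms)
  apply ContinuousOn.div continuousOn_const
  · apply ContinuousOn.mul continuousOn_const
    apply ContinuousOn.rpow_const (by fun_prop)
    intro y hy
    rw [uIcc_of_le hw] at hy
    left
    nlinarith [hy.1]
  · intro y hy
    rw [uIcc_of_le hw] at hy
    have h1 : 0 < m * y + (ms-1)*γ := by nlinarith [hy.1]
    positivity

lemma pow_int_helper (m w : ℝ) (hm : 0 < m) (C : ℝ) :
    (∫ y in (0:ℝ)..w, C * y ^ (m-1)) = C * (w ^ m / m) := by
  rw [intervalIntegral.integral_const_mul, integral_rpow (Or.inl (by linarith))]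
  rw [show m - 1 + 1 = m by ring, Real.zero_rpow (ne_of_gt hm)]
  ring

lemma inner_le (m ms γ w : ℝ) (hm : 0 < m) (hms : 1 < ms) (hγ : 0 < γ) (hw : 0 ≤ w) :
    (∫ y in (0:ℝ)..w, m ^ m * ((ms - 1) * γ) ^ ms * y ^ (m - 1) /
      (betaFn m ms * (m * y + (ms - 1) * γ) ^ (m + ms)))
    ≤ m ^ m * ((ms - 1) * γ) ^ ms / (betaFn m ms * ((ms - 1) * γ) ^ (m + ms)) * (w ^ m / m) := by
  have hB := betaFn_pos hm (by linarith : (0:ℝ) < ms)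
  have hcγ : 0 < (ms - 1) * γ := by nlinarith
  rw [← pow_int_helper m w hm]
  apply intervalIntegral.integral_mono_on hw (inner_integrable m ms γ w hm hms hγ hw)
    (((intervalIntegrable_rpow' (by linarith)).const_mul _))
  intro y hy
  have hy0 : 0 ≤ y := hy.1
  have h1 : 0 < m * y + (ms - 1) * γ := by nlinarith
  have key : m ^ m * ((ms - 1) * γ) ^ ms / (betaFn m ms * ((ms - 1) * γ) ^ (m + ms)) * y ^ (m-1)
      = m ^ m * ((ms - 1) * γ) ^ ms * y ^ (m - 1) /
        (betaFn m ms * ((ms - 1) * γ) ^ (m + ms)) := by ring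
  rw [key]
  gcongr
  nlinarith [hy.1]

lemma le_inner (m ms γ w e : ℝ) (hm : 0 < m) (hms : 1 < ms) (hγ : 0 < γ) (hw : 0 ≤ w)
    (he : m * w ≤ e) :
    m ^ m * ((ms - 1) * γ) ^ ms / (betaFn m ms * (e + (ms - 1) * γ) ^ (m + ms)) * (w ^ m / m)
    ≤ (∫ y in (0:ℝ)..w, m ^ m * ((ms - 1) * γ) ^ ms * y ^ (m - 1) /
      (betaFn m ms * (m * y + (ms - 1) * γ) ^ (m + ms))) := by
  have hB := betaFn_pos hm (by linarith : (0:ℝ) < ms)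
  have hcγ : 0 < (ms - 1) * γ := by nlinarith
  have he0 : 0 ≤ e := le_trans (by positivity) he
  rw [← pow_int_helper m w hm]
  apply intervalIntegral.integral_mono_on hw
    (((intervalIntegrable_rpow' (by linarith)).const_mul _))
    (inner_integrable m ms γ w hm hms hγ hw)
  intro y hy
  have hy0 : 0 ≤ y := hy.1
  have h1 : 0 < m * y + (ms - 1) * γ := by nlinarith
  have key : m ^ m * ((ms - 1) * γ) ^ ms / (betaFn m ms * (e + (ms - 1) * γ) ^ (m + ms)) * y ^ (m-1)
      = m ^ m * ((ms - 1) * γ) ^ ms * y ^ (m - 1) /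
        (betaFn m ms * (e + (ms - 1) * γ) ^ (m + ms)) := by ring
  rw [key]
  gcongr
  nlinarith [hy.2]

lemma outer_integrable (m ms α r0 r2 z γ : ℝ) (hm : 0 < m) (hms : 1 < ms) (hα : 0 < α)
    (h0 : 0 < r0) (h02 : r0 < r2) (hz : 0 < z) (hγ : 0 < γ) :
    IntervalIntegrable (fun x => (∫ y in (0:ℝ)..(x * z), m ^ m * ((ms - 1) * γ) ^ ms * y ^ (m - 1) /
      (betaFn m ms * (m * y + (ms - 1) * γ) ^ (m + ms))) * x ^ (2 / α - 1))
      volume (r0 ^ α) (r2 ^ α) := by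
  have hr : r0 ^ α ≤ r2 ^ α := Real.rpow_le_rpow h0.le h02.le hα.le
  have hr0 : 0 < r0 ^ α := Real.rpow_pos_of_pos h0 α
  have hB := betaFn_pos hm (by linarith : (0:ℝ) < ms)
  apply IntervalIntegrable.mul_continuousOn
  · apply MonotoneOn.intervalIntegrable
    rw [uIcc_of_le hr]
    intro x1 hx1 x2 hx2 h12
    have hx1p : 0 < x1 := lt_of_lt_of_le hr0 hx1.1
    have hx2p : 0 < x2 := lt_of_lt_of_le hr0 hx2.1
    apply intervalIntegral.integral_mono_interval le_rfl
      (mul_nonneg hx1p.le hz.le) (mul_le_mul_of_nonneg_right h12 hz.le)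
    · refine (ae_restrict_iff' measurableSet_Ioc).mpr (ae_of_all _ fun y hy => ?_)
      have hy0 : 0 < y := hy.1
      have h1 : 0 < m * y + (ms - 1) * γ := by nlinarith
      have hcγ : (0:ℝ) ≤ (ms - 1) * γ := by nlinarith
      exact div_nonneg (mul_nonneg (mul_nonneg (Real.rpow_nonneg hm.le m)
        (Real.rpow_nonneg hcγ ms)) (Real.rpow_nonneg hy0.le _))
        (mul_nonneg hB.le (Real.rpow_nonneg h1.le _))
    · exact inner_integrable m ms γ _ hm hms hγ (by positivity)
  · apply ContinuousOn.rpow_const continuousOn_id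
    intro x hx
    rw [uIcc_of_le hr] at hx
    exact Or.inl (ne_of_gt (lt_of_lt_of_le hr0 hx.1))

lemma A_val (m α r0 r2 C : ℝ) (hm : 0 < m) (hα : 0 < α) (h0 : 0 < r0) (h02 : r0 < r2) :
    (∫ x in (r0 ^ α)..(r2 ^ α), C * x ^ m * x ^ (2 / α - 1))
      = C * ((r2 ^ (2 + α * m) - r0 ^ (2 + α * m)) / (m + 2 / α)) := by
  have hr : r0 ^ α ≤ r2 ^ α := Real.rpow_le_rpow h0.le h02.le hα.le
  have hr0 : 0 < r0 ^ α := Real.rpow_pos_of_pos h0 α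
  rw [intervalIntegral.integral_congr (g := fun x => C * x ^ (m + 2 / α - 1))
    (fun x hx => by
      rw [uIcc_of_le hr] at hx
      have hxp : 0 < x := lt_of_lt_of_le hr0 hx.1
      show C * x ^ m * x ^ (2 / α - 1) = C * x ^ (m + 2 / α - 1)
      rw [show m + 2 / α - 1 = m + (2 / α - 1) by ring, Real.rpow_add hxp]
      ring)]
  rw [intervalIntegral.integral_const_mul, integral_rpow (Or.inl (by nlinarith [div_pos (by norm_num : (0:ℝ)<2) hα] : (-1:ℝ) < m + 2/α - 1))]
  rw [show m + 2 / α - 1 + 1 = m + 2 / α by ring]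
  rw [← Real.rpow_mul h0.le, ← Real.rpow_mul (h0.trans h02).le]
  rw [show α * (m + 2 / α) = 2 + α * m by field_simp; ring]

lemma kappa_tendsto (c d p : ℝ) (hc : 0 < c) (hd : 0 < d) (hp : 0 ≤ p) :
    Tendsto (fun γ : ℝ => (c * γ) ^ p / (d + c * γ) ^ p) atTop (nhds 1) := by
  have h2 : Tendsto (fun γ : ℝ => d + c * γ) atTop atTop :=
    tendsto_atTop_add_const_left _ d (Tendsto.const_mul_atTop hc tendsto_id)
  have h1 : Tendsto (fun γ : ℝ => c * γ / (d + c * γ)) atTop (nhds 1) := by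
    have h3 : Tendsto (fun γ : ℝ => 1 - d / (d + c * γ)) atTop (nhds 1) := by
      simpa using tendsto_const_nhds.sub (Tendsto.div_atTop (tendsto_const_nhds (x := d)) h2)
    apply h3.congr'
    filter_upwards [eventually_gt_atTop 0] with γ hγ
    have hpos : 0 < d + c * γ := by nlinarith
    field_simp
    ring
  have h4 := h1.rpow_const (Or.inr hp)
  rw [Real.one_rpow] at h4
  apply h4.congr'
  filter_upwards [eventually_gt_atTop 0] with γ hγ
  have hpos : 0 < d + c * γ := by nlinarith
  rw [Real.div_rpow (by nlinarith) hpos.le]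

end Aux


/-- High-SNR asymptotic outage probability: for the outage probability
`OP(γ̄) = (2/((r₂²−r₀²)α)) ∫_{r₀^α}^{r₂^α} G_γ̄(x·z) x^{2/α−1} dx`, where `G_γ̄` is
the Fisher–Snedecor F power CDF with mean `γ̄`, one has
`γ̄^m · OP(γ̄) → 2(r₂^{2+αm} − r₀^{2+αm}) m^{m−1} z^m / ((2+αm)(r₂²−r₀²)B(m,m_s)(m_s−1)^m)`
as `γ̄ → ∞`; in particular the diversity order is `m`. -/
theorem outage_probability_high_snr_asymptotics
    (m ms α r0 r2 z : ℝ) (hm : 0 < m) (hms : 1 < ms) (hα : 0 < α)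
    (h0 : 0 < r0) (h02 : r0 < r2) (hz : 0 < z) :
    Filter.Tendsto (fun γ : ℝ => γ ^ m *
      ((2 / ((r2 ^ 2 - r0 ^ 2) * α)) *
        ∫ x in (r0 ^ α)..(r2 ^ α),
          (∫ y in (0:ℝ)..(x * z), m ^ m * ((ms - 1) * γ) ^ ms * y ^ (m - 1) /
            (betaFn m ms * (m * y + (ms - 1) * γ) ^ (m + ms))) * x ^ (2 / α - 1)))
      Filter.atTop
      (nhds (2 * (r2 ^ (2 + α * m) - r0 ^ (2 + α * m)) * m ^ (m - 1) * z ^ m /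
        ((2 + α * m) * (r2 ^ 2 - r0 ^ 2) * betaFn m ms * (ms - 1) ^ m))) := by
  have hms0 : (0:ℝ) < ms := by linarith
  have hB := betaFn_pos hm hms0
  have hc : (0:ℝ) < ms - 1 := by linarith
  have hr : r0 ^ α ≤ r2 ^ α := Real.rpow_le_rpow h0.le h02.le hα.le
  have hr0 : 0 < r0 ^ α := Real.rpow_pos_of_pos h0 α
  have hr2 : 0 < r2 ^ α := Real.rpow_pos_of_pos (h0.trans h02) α
  have hK : 0 < r2 ^ 2 - r0 ^ 2 := by nlinarith
  have hcm : 0 < (ms - 1) ^ m := Real.rpow_pos_of_pos hc m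
  have hd : 0 < m * r2 ^ α * z := mul_pos (mul_pos hm hr2) hz
  have hP : 0 < 2 / ((r2 ^ 2 - r0 ^ 2) * α) := div_pos two_pos (mul_pos hK hα)
  set d : ℝ := m * r2 ^ α * z with hd_def
  set C : ℝ := m ^ (m - 1) * z ^ m / (betaFn m ms * (ms - 1) ^ m) with hC_def
  set P : ℝ := 2 / ((r2 ^ 2 - r0 ^ 2) * α) with hP_def
  set L : ℝ := 2 * (r2 ^ (2 + α * m) - r0 ^ (2 + α * m)) * m ^ (m - 1) * z ^ m /
        ((2 + α * m) * (r2 ^ 2 - r0 ^ 2) * betaFn m ms * (ms - 1) ^ m) with hL_def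
  have hCpos : 0 < C := div_pos (mul_pos (Real.rpow_pos_of_pos hm _) (Real.rpow_pos_of_pos hz _))
    (mul_pos hB hcm)
  -- integrability of the comparison function
  have hUc : ContinuousOn (fun x => C * x ^ m * x ^ (2 / α - 1)) (uIcc (r0 ^ α) (r2 ^ α)) := by
    have hne : ∀ x ∈ uIcc (r0 ^ α) (r2 ^ α), x ≠ 0 ∨ True := fun x _ => Or.inr trivial
    apply ContinuousOn.mul
    · apply ContinuousOn.mul continuousOn_const
      apply ContinuousOn.rpow_const continuousOn_id
      intro x hx
      rw [uIcc_of_le hr] at hx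
      exact Or.inl (ne_of_gt (lt_of_lt_of_le hr0 hx.1))
    · apply ContinuousOn.rpow_const continuousOn_id
      intro x hx
      rw [uIcc_of_le hr] at hx
      exact Or.inl (ne_of_gt (lt_of_lt_of_le hr0 hx.1))
  have hUint : IntervalIntegrable (fun x => C * x ^ m * x ^ (2 / α - 1)) volume (r0 ^ α) (r2 ^ α) :=
    hUc.intervalIntegrable
  set A : ℝ := ∫ x in (r0 ^ α)..(r2 ^ α), C * x ^ m * x ^ (2 / α - 1) with hA_def
  have hAval : A = C * ((r2 ^ (2 + α * m) - r0 ^ (2 + α * m)) / (m + 2 / α)) :=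
    A_val m α r0 r2 C hm hα h0 h02
  have hm2α : (0:ℝ) < m + 2 / α := by positivity
  have h2αm : (0:ℝ) < 2 + α * m := by positivity
  have hL : P * A = L := by
    rw [hAval, hC_def, hP_def, hL_def]
    rw [div_mul_div_comm, div_mul_div_comm]
    rw [div_eq_div_iff (by positivity) (by positivity)]
    field_simp
    ring
  -- upper bound
  have hup : ∀ γ : ℝ, 0 < γ → γ ^ m *
      (P * ∫ x in (r0 ^ α)..(r2 ^ α),
          (∫ y in (0:ℝ)..(x * z), m ^ m * ((ms - 1) * γ) ^ ms * y ^ (m - 1) /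
            (betaFn m ms * (m * y + (ms - 1) * γ) ^ (m + ms))) * x ^ (2 / α - 1)) ≤ L := by
    intro γ hγ
    have hγm : 0 < γ ^ m := Real.rpow_pos_of_pos hγ m
    have hcγ : 0 < (ms - 1) * γ := mul_pos hc hγ
    have hGint := outer_integrable m ms α r0 r2 z γ hm hms hα h0 h02 hz hγ
    have key : γ ^ m * (∫ x in (r0 ^ α)..(r2 ^ α),
          (∫ y in (0:ℝ)..(x * z), m ^ m * ((ms - 1) * γ) ^ ms * y ^ (m - 1) /
            (betaFn m ms * (m * y + (ms - 1) * γ) ^ (m + ms))) * x ^ (2 / α - 1)) ≤ A := by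
      rw [← intervalIntegral.integral_const_mul]
      apply intervalIntegral.integral_mono_on hr (hGint.const_mul _) hUint
      intro x hx
      have hxp : 0 < x := lt_of_lt_of_le hr0 hx.1
      have hpow : (0:ℝ) ≤ x ^ (2 / α - 1) := Real.rpow_nonneg hxp.le _
      have h5 := inner_le m ms γ (x * z) hm hms hγ (mul_nonneg hxp.le hz.le)
      have e1 : ((ms - 1) * γ) ^ (m + ms) = ((ms - 1) ^ m * γ ^ m) * ((ms - 1) * γ) ^ ms := by
        rw [Real.rpow_add hcγ, Real.mul_rpow hc.le hγ.le]
      have e2 : (x * z) ^ m = x ^ m * z ^ m := Real.mul_rpow hxp.le hz.le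
      have e3 : m ^ (m - 1) = m ^ m / m := Real.rpow_sub_one hm.ne' m
      have heq : γ ^ m * (m ^ m * ((ms - 1) * γ) ^ ms /
          (betaFn m ms * ((ms - 1) * γ) ^ (m + ms)) * ((x * z) ^ m / m)) = C * x ^ m := by
        rw [hC_def, e1, e2, e3]
        field_simp
      calc γ ^ m * ((∫ y in (0:ℝ)..(x * z), m ^ m * ((ms - 1) * γ) ^ ms * y ^ (m - 1) /
            (betaFn m ms * (m * y + (ms - 1) * γ) ^ (m + ms))) * x ^ (2 / α - 1))
          = (γ ^ m * (∫ y in (0:ℝ)..(x * z), m ^ m * ((ms - 1) * γ) ^ ms * y ^ (m - 1) /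
            (betaFn m ms * (m * y + (ms - 1) * γ) ^ (m + ms)))) * x ^ (2 / α - 1) := by ring
        _ ≤ (γ ^ m * (m ^ m * ((ms - 1) * γ) ^ ms /
            (betaFn m ms * ((ms - 1) * γ) ^ (m + ms)) * ((x * z) ^ m / m))) * x ^ (2 / α - 1) := by
            apply mul_le_mul_of_nonneg_right (mul_le_mul_of_nonneg_left h5 hγm.le) hpow
        _ = C * x ^ m * x ^ (2 / α - 1) := by rw [heq]
    calc γ ^ m * (P * _) = P * (γ ^ m * _) := by ring
      _ ≤ P * A := mul_le_mul_of_nonneg_left key hP.le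
      _ = L := hL
  -- lower bound
  have hlow : ∀ γ : ℝ, 0 < γ →
      ((ms - 1) * γ) ^ (m + ms) / (d + (ms - 1) * γ) ^ (m + ms) * L ≤ γ ^ m *
      (P * ∫ x in (r0 ^ α)..(r2 ^ α),
          (∫ y in (0:ℝ)..(x * z), m ^ m * ((ms - 1) * γ) ^ ms * y ^ (m - 1) /
            (betaFn m ms * (m * y + (ms - 1) * γ) ^ (m + ms))) * x ^ (2 / α - 1)) := by
    intro γ hγ
    have hγm : 0 < γ ^ m := Real.rpow_pos_of_pos hγ m
    have hcγ : 0 < (ms - 1) * γ := mul_pos hc hγ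
    have hdγ : 0 < d + (ms - 1) * γ := by positivity
    have hGint := outer_integrable m ms α r0 r2 z γ hm hms hα h0 h02 hz hγ
    set κ : ℝ := ((ms - 1) * γ) ^ (m + ms) / (d + (ms - 1) * γ) ^ (m + ms) with hκ_def
    have hκ0 : 0 ≤ κ := by positivity
    have key : κ * A ≤ γ ^ m * (∫ x in (r0 ^ α)..(r2 ^ α),
          (∫ y in (0:ℝ)..(x * z), m ^ m * ((ms - 1) * γ) ^ ms * y ^ (m - 1) /
            (betaFn m ms * (m * y + (ms - 1) * γ) ^ (m + ms))) * x ^ (2 / α - 1)) := by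
      rw [← intervalIntegral.integral_const_mul, ← intervalIntegral.integral_const_mul]
      apply intervalIntegral.integral_mono_on hr (hUint.const_mul _) (hGint.const_mul _)
      intro x hx
      have hxp : 0 < x := lt_of_lt_of_le hr0 hx.1
      have hpow : (0:ℝ) ≤ x ^ (2 / α - 1) := Real.rpow_nonneg hxp.le _
      have h5 := le_inner m ms γ (x * z) d hm hms hγ (mul_nonneg hxp.le hz.le)
        (by rw [hd_def]; nlinarith [mul_nonneg (mul_nonneg hm.le (sub_nonneg.mpr hx.2)) hz.le])
      have e1 : ((ms - 1) * γ) ^ (m + ms) = ((ms - 1) ^ m * γ ^ m) * ((ms - 1) * γ) ^ ms := by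
        rw [Real.rpow_add hcγ, Real.mul_rpow hc.le hγ.le]
      have e2 : (x * z) ^ m = x ^ m * z ^ m := Real.mul_rpow hxp.le hz.le
      have e3 : m ^ (m - 1) = m ^ m / m := Real.rpow_sub_one hm.ne' m
      have heq : γ ^ m * (m ^ m * ((ms - 1) * γ) ^ ms /
          (betaFn m ms * (d + (ms - 1) * γ) ^ (m + ms)) * ((x * z) ^ m / m)) = κ * (C * x ^ m) := by
        rw [hκ_def, hC_def, e1, e2, e3]
        field_simp
      calc κ * (C * x ^ m * x ^ (2 / α - 1))
          = (γ ^ m * (m ^ m * ((ms - 1) * γ) ^ ms /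
            (betaFn m ms * (d + (ms - 1) * γ) ^ (m + ms)) * ((x * z) ^ m / m))) * x ^ (2 / α - 1) := by
            rw [heq]; ring
        _ ≤ (γ ^ m * (∫ y in (0:ℝ)..(x * z), m ^ m * ((ms - 1) * γ) ^ ms * y ^ (m - 1) /
            (betaFn m ms * (m * y + (ms - 1) * γ) ^ (m + ms)))) * x ^ (2 / α - 1) := by
            apply mul_le_mul_of_nonneg_right (mul_le_mul_of_nonneg_left h5 hγm.le) hpow
        _ = γ ^ m * ((∫ y in (0:ℝ)..(x * z), m ^ m * ((ms - 1) * γ) ^ ms * y ^ (m - 1) /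
            (betaFn m ms * (m * y + (ms - 1) * γ) ^ (m + ms))) * x ^ (2 / α - 1)) := by ring
    calc κ * L = κ * (P * A) := by rw [hL]
      _ = P * (κ * A) := by ring
      _ ≤ P * (γ ^ m * _) := mul_le_mul_of_nonneg_left key hP.le
      _ = γ ^ m * (P * _) := by ring
  -- assemble
  have hκt : Tendsto (fun γ : ℝ => ((ms - 1) * γ) ^ (m + ms) / (d + (ms - 1) * γ) ^ (m + ms) * L)
      atTop (nhds L) := by
    simpa using (kappa_tendsto (ms - 1) d (m + ms) hc hd (by linarith)).mul_const L
  apply tendsto_of_tendsto_of_tendsto_of_le_of_le' hκt tendsto_const_nhds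
  · filter_upwards [eventually_gt_atTop 0] with γ hγ using hlow γ hγ
  · filter_upwards [eventually_gt_atTop 0] with γ hγ using hup γ hγ
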